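/- arXiv:1701.03191 — 3 statements merged into one kernel-verified Lean document; each statement's English description precedes it below -/
import Mathlib

section
/- Every m×n matrix M with m ≤ n can be written as the Hadamard product of at most ⌈m/(r-1)⌉ matrices each of rank at most r, for any fixed r with 2 ≤ r ≤ m. -/
/-- Every `m × n` matrix with `m ≤ n` is the Hadamard product of at most
`⌈m/(r-1)⌉` matrices each of rank at most `r`, for any `2 ≤ r ≤ m`.
The Hadamard product of the empty list is the all-ones matrix (the Hadamard identity). -/
theorem hadamard_decomposition_bound {m n : ℕ} (hmn : m ≤ n) (r : ℕ)
    (hr2 : 2 ≤ r) (hrm : r ≤ m) (M : Matrix (Fin m) (Fin n) ℂ) :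
    ∃ L : List (Matrix (Fin m) (Fin n) ℂ),
      (L.length : ℤ) ≤ ⌈(m : ℚ) / ((r : ℚ) - 1)⌉ ∧
      (∀ A ∈ L, A.rank ≤ r) ∧
      M = L.foldr Matrix.hadamard (Matrix.of fun _ _ => (1 : ℂ)) := by
  set d := r - 1 with hd
  have hd0 : 0 < d := by omega
  have hdr : d < r := by omega
  set B := (m + d - 1) / d with hB
  have h1 : d * B + (m + d - 1) % d = m + d - 1 := Nat.div_add_mod _ _
  have h2 : (m + d - 1) % d < d := Nat.mod_lt _ hd0
  set s := (m + d - 1) % d with hs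
  set t := d * B with ht
  have hB1 : 1 ≤ B := (Nat.one_le_div_iff hd0).mpr (by omega)
  have hmB : m ≤ B * d := by rw [Nat.mul_comm]; omega
  have hBm : (B - 1) * d < m := by
    have e : (B - 1) * d = B * d - d := by rw [Nat.sub_mul, one_mul]
    rw [e, Nat.mul_comm]
    omega
  -- the factor matrices
  let f : ℕ → Fin m → Fin r := fun k i =>
    if i.val / d = k then ⟨i.val % d, lt_of_lt_of_le (Nat.mod_lt _ hd0) hdr.le⟩
    else ⟨d, hdr⟩
  let Q : ℕ → Matrix (Fin r) (Fin n) ℂ := fun k => Matrix.of fun u j =>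
    if h : (u : ℕ) < d ∧ k * d + u < m then M ⟨k * d + u, h.2⟩ j else 1
  let P : ℕ → Matrix (Fin m) (Fin r) ℂ := fun k => Matrix.of fun i u =>
    if u = f k i then 1 else 0
  let A : ℕ → Matrix (Fin m) (Fin n) ℂ := fun k => P k * Q k
  have hAapp : ∀ k (i : Fin m) j, A k i j = if i.val / d = k then M i j else 1 := by
    intro k i j
    have hstep : A k i j = Q k (f k i) j := by
      simp only [A, Matrix.mul_apply, P, Matrix.of_apply, ite_mul, one_mul, zero_mul]
      rw [Finset.sum_ite_eq' Finset.univ (f k i) (fun u => Q k u j)]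
      simp
    by_cases hik : i.val / d = k
    · have hm1 : (i : ℕ) % d < d := Nat.mod_lt _ hd0
      have hm2 : k * d + i.val % d = i.val := by
        have h := Nat.div_add_mod i.val d
        rw [← hik, Nat.mul_comm]
        exact h
      rw [hstep, if_pos hik]
      simp only [f, if_pos hik, Q, Matrix.of_apply]
      rw [dif_pos ⟨hm1, by rw [hm2]; exact i.isLt⟩]
      congr 1
      exact Fin.ext hm2
    · rw [hstep, if_neg hik]
      simp only [f, if_neg hik, Q, Matrix.of_apply]
      rw [dif_neg (by simp)]
  refine ⟨(List.range B).map A, ?_, ?_, ?_⟩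
  · -- length bound
    simp only [List.length_map, List.length_range]
    rw [Int.le_ceil_iff]
    have hpos : (0:ℚ) < (r : ℚ) - 1 := by
      have : (2:ℚ) ≤ (r:ℚ) := by exact_mod_cast hr2
      linarith
    push_cast
    rw [lt_div_iff₀ hpos]
    have e2 : ((r:ℚ) - 1) = (d : ℚ) := by
      rw [hd, Nat.cast_sub (by omega : 1 ≤ r), Nat.cast_one]
    have e1 : ((B:ℚ) - 1) = ((B - 1 : ℕ) : ℚ) := by
      rw [Nat.cast_sub hB1, Nat.cast_one]
    rw [e1, e2]
    exact_mod_cast hBm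
  · -- rank bound
    intro X hX
    simp only [List.mem_map] at hX
    obtain ⟨k, -, rfl⟩ := hX
    calc (A k).rank ≤ (Q k).rank := Matrix.rank_mul_le_right _ _
      _ ≤ Fintype.card (Fin r) := Matrix.rank_le_card_height _
      _ = r := Fintype.card_fin r
  · -- product equals M
    have key : ∀ (l : List (Matrix (Fin m) (Fin n) ℂ)) (i : Fin m) (j : Fin n),
        (l.foldr Matrix.hadamard (Matrix.of fun _ _ => (1:ℂ))) i j
          = (l.map (fun X => X i j)).prod := by
      intro l i j
      induction l with
      | nil => simp
      | cons a u ih => simp [Matrix.hadamard_apply, ih]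
    funext i j
    rw [key, List.map_map]
    symm
    have hiB : i.val / d ∈ Finset.range B :=
      Finset.mem_range.mpr ((Nat.div_lt_iff_lt_mul hd0).mpr (lt_of_lt_of_le i.isLt hmB))
    calc ((List.range B).map ((fun X => X i j) ∘ A)).prod
        = ∏ k ∈ Finset.range B, A k i j := rfl
      _ = ∏ k ∈ Finset.range B, (if i.val / d = k then M i j else 1) :=
          Finset.prod_congr rfl (fun k _ => hAapp k i j)
      _ = M i j := by rw [Finset.prod_ite_eq, if_pos hiB]
end

section
/- For square matrices of size n×n with r = n−1 ≥ 2, every n×n matrix M over ℂ can be written as the Hadamard product of two matrices each of rank at most n−1; i.e., the maximal (n−1)-th Hadamard rank equals 2 for n ≥ 3. -/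
open Matrix

lemma rank_le_of_det_eq_zero {m : ℕ} (A : Matrix (Fin m) (Fin m) ℂ) (h : A.det = 0) :
    A.rank ≤ m - 1 := by
  obtain ⟨v, hv, hAv⟩ := Matrix.exists_mulVec_eq_zero_iff.2 h
  have hsum := LinearMap.finrank_range_add_finrank_ker A.mulVecLin
  have hpi : Module.finrank ℂ (Fin m → ℂ) = m := by simp
  have hk : 0 < Module.finrank ℂ (LinearMap.ker A.mulVecLin) := by
    rw [Module.finrank_pos_iff_exists_ne_zero]
    exact ⟨⟨v, by simpa using hAv⟩, by simpa using hv⟩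
  show Module.finrank ℂ (LinearMap.range A.mulVecLin) ≤ m - 1
  omega

lemma exists_pq (U V U' V' : ℂ) :
    ∃ p q : ℂ, p*V - p*V' - q*U + q*U' + U*V' - U'*V = 0 := by
  rcases eq_or_ne V V' with h | h
  · exact ⟨0, V', by subst h; ring⟩
  · refine ⟨(U'*V - U*V')/(V - V'), 0, ?_⟩
    have hne : V - V' ≠ 0 := sub_ne_zero.2 h
    field_simp
    ring

lemma det3_id (a0 a1 a2 b0 b1 b2 t x0 x1 x2 : ℂ)
    (e0 : x0 = a0 + t * b0) (e1 : x1 = a1 + t * b1) (e2 : x2 = a2 + t * b2)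
    (h0 : x0 ≠ 0) (h1 : x1 ≠ 0) (h2 : x2 ≠ 0) :
    (a0/x0) * (b1/x1) - (a0/x0) * (b2/x2) - (b0/x0) * (a1/x1) + (b0/x0) * (a2/x2)
      + (a1/x1) * (b2/x2) - (a2/x2) * (b1/x1) = 0 := by
  have key : a0 * b1 * x2 - a0 * b2 * x1 - b0 * a1 * x2 + b0 * a2 * x1
      + (a1 * b2 - a2 * b1) * x0 = 0 := by
    subst e0 e1 e2; ring
  have hu0 : x0 * x0⁻¹ = 1 := mul_inv_cancel₀ h0
  have hu1 : x1 * x1⁻¹ = 1 := mul_inv_cancel₀ h1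
  have hu2 : x2 * x2⁻¹ = 1 := mul_inv_cancel₀ h2
  simp only [div_eq_mul_inv]
  linear_combination (x0⁻¹*x1⁻¹*x2⁻¹) * key - (a0*b1 - b0*a1)*(x0⁻¹*x1⁻¹)*hu2
    + (a0*b2 - b0*a2)*(x0⁻¹*x2⁻¹)*hu1 - (a1*b2 - a2*b1)*(x1⁻¹*x2⁻¹)*hu0

lemma n3_case (M : Matrix (Fin 3) (Fin 3) ℂ) :
    ∃ A B : Matrix (Fin 3) (Fin 3) ℂ,
      A.rank ≤ 2 ∧ B.rank ≤ 2 ∧ M = Matrix.hadamard A B := by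
  obtain ⟨t, ht⟩ := Infinite.exists_notMem_finset
    ((Finset.univ : Finset (Fin 3)).image fun i => -(M i 0) / (M i 1))
  set x : Fin 3 → ℂ := fun i => M i 0 + t * M i 1 with hxdef
  have hx : ∀ i, x i = 0 → M i 0 = 0 ∧ M i 1 = 0 := by
    intro i h
    by_cases hb : M i 1 = 0
    · refine ⟨?_, hb⟩
      have h' : M i 0 + t * M i 1 = 0 := h
      rw [hb] at h'; simpa using h'
    · exfalso
      apply ht
      refine Finset.mem_image.2 ⟨i, Finset.mem_univ _, ?_⟩
      rw [div_eq_iff hb]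
      have h' : M i 0 + t * M i 1 = 0 := h
      linear_combination -h'
  -- uniform r, with a free "special" part s used at zero positions
  have hcond : ∀ s : Fin 3 → ℂ × ℂ, ∀ i,
      x i * ((if x i = 0 then s i else (M i 0 / x i, M i 1 / x i)).1) = M i 0 ∧
      x i * ((if x i = 0 then s i else (M i 0 / x i, M i 1 / x i)).2) = M i 1 := by
    intro s i
    by_cases hxi : x i = 0
    · simp [hxi, (hx i hxi).1, (hx i hxi).2]
    · rw [if_neg hxi]
      constructor <;> · simp only; rw [mul_comm, div_mul_cancel₀ _ hxi]
  have key : ∃ r : Fin 3 → ℂ × ℂ,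
      (∀ i, x i * (r i).1 = M i 0 ∧ x i * (r i).2 = M i 1) ∧
      ((r 0).1 * (r 1).2 - (r 0).1 * (r 2).2 - (r 0).2 * (r 1).1 + (r 0).2 * (r 2).1
        + (r 1).1 * (r 2).2 - (r 2).1 * (r 1).2) = 0 := by
    by_cases h0 : x 0 = 0 <;> by_cases h1 : x 1 = 0 <;> by_cases h2 : x 2 = 0
    -- 000
    · exact ⟨_, hcond (fun _ => (1,1)), by
        simp only [if_pos h0, if_pos h1, if_pos h2]; ring⟩
    -- 00x
    · exact ⟨_, hcond (fun _ => (1,1)), by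
        simp only [if_pos h0, if_pos h1, if_neg h2]; ring⟩
    -- 0x0
    · exact ⟨_, hcond (fun _ => (1,1)), by
        simp only [if_pos h0, if_neg h1, if_pos h2]; ring⟩
    -- 0xx
    · obtain ⟨p, q, hpq⟩ := exists_pq (M 1 0 / x 1) (M 1 1 / x 1) (M 2 0 / x 2) (M 2 1 / x 2)
      exact ⟨_, hcond (fun _ => (p, q)), by
        simp only [if_pos h0, if_neg h1, if_neg h2]; linear_combination hpq⟩
    -- x00
    · exact ⟨_, hcond (fun _ => (1,1)), by
        simp only [if_neg h0, if_pos h1, if_pos h2]; ring⟩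
    -- x0x
    · obtain ⟨p, q, hpq⟩ := exists_pq (M 2 0 / x 2) (M 2 1 / x 2) (M 0 0 / x 0) (M 0 1 / x 0)
      exact ⟨_, hcond (fun _ => (p, q)), by
        simp only [if_neg h0, if_pos h1, if_neg h2]; linear_combination hpq⟩
    -- xx0
    · obtain ⟨p, q, hpq⟩ := exists_pq (M 0 0 / x 0) (M 0 1 / x 0) (M 1 0 / x 1) (M 1 1 / x 1)
      exact ⟨_, hcond (fun _ => (p, q)), by
        simp only [if_neg h0, if_neg h1, if_pos h2]; linear_combination hpq⟩
    -- xxx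
    · refine ⟨_, hcond (fun _ => (1,1)), ?_⟩
      simp only [if_neg h0, if_neg h1, if_neg h2]
      exact det3_id (M 0 0) (M 1 0) (M 2 0) (M 0 1) (M 1 1) (M 2 1) t (x 0) (x 1) (x 2)
        rfl rfl rfl h0 h1 h2
  obtain ⟨r, hr, hdet⟩ := key
  refine ⟨Matrix.of fun i => ![x i, x i, M i 2],
    Matrix.of fun i => ![(r i).1, (r i).2, 1], ?_, ?_, ?_⟩
  · have hd : (Matrix.of fun i => ![x i, x i, M i 2]).det = 0 := by
      simp [Matrix.det_fin_three]
      try ring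
    simpa using rank_le_of_det_eq_zero _ hd
  · have hd : (Matrix.of fun i => ![(r i).1, (r i).2, (1:ℂ)]).det = 0 := by
      simp [Matrix.det_fin_three]
      try linear_combination hdet
    simpa using rank_le_of_det_eq_zero _ hd
  · ext i j
    fin_cases j
    · simpa [Matrix.hadamard_apply] using (hr i).1.symm
    · simpa [Matrix.hadamard_apply] using (hr i).2.symm
    · simp [Matrix.hadamard_apply]

/-- For `n ≥ 3`, every `n × n` complex matrix is the Hadamard product of two
matrices each of rank at most `n - 1`: the maximal `(n-1)`-th Hadamard rank is `2`. -/
theorem hadamard_rank_two_factors {n : ℕ} (hn : 3 ≤ n) (M : Matrix (Fin n) (Fin n) ℂ) :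
    ∃ A B : Matrix (Fin n) (Fin n) ℂ,
      A.rank ≤ n - 1 ∧ B.rank ≤ n - 1 ∧ M = Matrix.hadamard A B := by
  rcases Nat.lt_or_ge n 4 with h4 | h4
  · have hn3 : n = 3 := by omega
    subst hn3
    obtain ⟨A, B, hA, hB, hM⟩ := n3_case M
    exact ⟨A, B, by simpa using hA, by simpa using hB, hM⟩
  · refine ⟨Matrix.of fun i j => if (j : ℕ) < n - 2 then M i j else 1,
      Matrix.of fun i j => if (j : ℕ) < n - 2 then 1 else M i j, ?_, ?_, ?_⟩
    · apply rank_le_of_det_eq_zero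
      apply Matrix.det_zero_of_column_eq (i := (⟨n-2, by omega⟩ : Fin n)) (j := ⟨n-1, by omega⟩)
      · simp only [ne_eq, Fin.mk.injEq]
        omega
      · intro k
        simp only [Matrix.of_apply]
        rw [if_neg (by omega), if_neg (by omega)]
    · apply rank_le_of_det_eq_zero
      apply Matrix.det_zero_of_column_eq (i := (⟨0, by omega⟩ : Fin n)) (j := ⟨1, by omega⟩)
      · simp only [ne_eq, Fin.mk.injEq]
        omega
      · intro k
        simp only [Matrix.of_apply]
        rw [if_pos (by omega), if_pos (by omega)]
    · ext i j
      by_cases h : (j : ℕ) < n - 2 <;> simp [Matrix.hadamard_apply, h]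
end

section
/- If s < ⌈log_r(min{m,n})⌉ (equivalently r^s < min{m,n}), then no m×n matrix of rank min{m,n} can be written as the Hadamard product of s matrices each of rank at most r. Consequently the generic r-th Hadamard rank of m×n matrices is at least ⌈log_r(min{m,n})⌉. -/
/-! The column space of `A ⊙ B` lies in the product of the column spaces of `A` and `B` inside
the algebra `m → K` (column `j` of `A ⊙ B` is the pointwise product of the columns `j`), and that
product is the image of their tensor product under multiplication. Hence
`rk (A ⊙ B) ≤ rk A * rk B`, a Hadamard product of `s` factors of rank `≤ r` has rank `≤ r ^ s`,
and it cannot have rank `min m n > r ^ s`. -/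

open Matrix Module

theorem Submodule.finrank_mul_le {K A : Type*} [Field K] [Ring A] [Algebra K A]
    (P Q : Submodule K A) [FiniteDimensional K P] [FiniteDimensional K Q] :
    finrank K ↥(P * Q) ≤ finrank K P * finrank K Q := by
  rw [← Submodule.mulMap_range, ← finrank_tensorProduct]
  exact LinearMap.finrank_range_le _

namespace Matrix

variable {m n K : Type*} [Fintype n] [Field K]

theorem rank_hadamard_le [Fintype m] (A B : Matrix m n K) : (A ⊙ B).rank ≤ A.rank * B.rank := by
  simp only [rank_eq_finrank_span_cols]
  calc finrank K (Submodule.span K (Set.range (A ⊙ B).col))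
      ≤ finrank K ↥(Submodule.span K (Set.range A.col) * Submodule.span K (Set.range B.col)) := by
        refine Submodule.finrank_mono (Submodule.span_le.mpr ?_)
        rintro _ ⟨j, rfl⟩
        exact Submodule.mul_mem_mul (Submodule.subset_span ⟨j, rfl⟩)
          (Submodule.subset_span ⟨j, rfl⟩)
    _ ≤ _ := Submodule.finrank_mul_le _ _

theorem rank_of_fun_one_le_one : (of fun (_ : m) (_ : n) => (1 : K)).rank ≤ 1 := by
  simpa [vecMulVec] using rank_vecMulVec_le (fun _ : m => (1 : K)) (fun _ : n => (1 : K))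

theorem rank_foldr_hadamard_le [Fintype m] {r : ℕ} (L : List (Matrix m n K))
    (hL : ∀ A ∈ L, A.rank ≤ r) :
    (L.foldr hadamard (of fun _ _ => 1)).rank ≤ r ^ L.length := by
  induction L with
  | nil => simpa using rank_of_fun_one_le_one
  | cons A L ih =>
    rw [List.foldr_cons, List.length_cons, pow_succ']
    exact (rank_hadamard_le _ _).trans <| Nat.mul_le_mul (hL A List.mem_cons_self)
      (ih fun B hB => hL B (List.mem_cons_of_mem A hB))

end Matrix

theorem hadamard_log_lower_bound_general {m n r s : ℕ} (hs : r ^ s < min m n) :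
    (∀ M : Matrix (Fin m) (Fin n) ℂ, M.rank = min m n →
      ∀ L : List (Matrix (Fin m) (Fin n) ℂ), L.length = s →
        (∀ A ∈ L, A.rank ≤ r) →
        L.foldr Matrix.hadamard (Matrix.of fun _ _ => (1 : ℂ)) ≠ M) ∧
    (∀ M : Matrix (Fin m) (Fin n) ℂ, M.rank = min m n →
      ∀ L : List (Matrix (Fin m) (Fin n) ℂ), (∀ A ∈ L, A.rank ≤ r) →
        L.foldr Matrix.hadamard (Matrix.of fun _ _ => (1 : ℂ)) = M →
        Nat.clog r (min m n) ≤ L.length) := by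
  constructor
  · rintro M hM L rfl hL rfl
    exact hs.not_ge (hM ▸ rank_foldr_hadamard_le L hL)
  · rintro M hM L hL rfl
    exact Nat.clog_le_of_le_pow (hM ▸ rank_foldr_hadamard_le L hL)

/-- If `r ^ s < min m n`, then no `m × n` matrix of full rank `min m n` is the
Hadamard product of `s` matrices of rank at most `r`; consequently any Hadamard
decomposition of a full-rank matrix into rank-`≤ r` factors has length at least
`⌈log_r (min m n)⌉`. The Hadamard product of a list is taken with the all-ones matrix
(the Hadamard identity) as base case. -/
theorem hadamard_log_lower_bound {m n r s : ℕ} (hr : 2 ≤ r) (hs : r ^ s < min m n) :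
    (∀ M : Matrix (Fin m) (Fin n) ℂ, M.rank = min m n →
      ∀ L : List (Matrix (Fin m) (Fin n) ℂ), L.length = s →
        (∀ A ∈ L, A.rank ≤ r) →
        L.foldr Matrix.hadamard (Matrix.of fun _ _ => (1 : ℂ)) ≠ M) ∧
    (∀ M : Matrix (Fin m) (Fin n) ℂ, M.rank = min m n →
      ∀ L : List (Matrix (Fin m) (Fin n) ℂ), (∀ A ∈ L, A.rank ≤ r) →
        L.foldr Matrix.hadamard (Matrix.of fun _ _ => (1 : ℂ)) = M →
        Nat.clog r (min m n) ≤ L.length) :=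
  hadamard_log_lower_bound_general hs
end
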